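/- Let D be an ∞-category, X a presentable ∞-category, and X̃ any reflective localization of Cat^k(X), the ∞-category of k-uple category objects in X (for example X̃ = Seg_k(X), or X̃ = CSS_k(X) when X is an ∞-topos). Then a functor F : D → X̃, d ↦ F(d)_{(•,…,•)}, preserves small limits if and only if each of the composite functors D → X, d ↦ F(d)_{(i₁,…,i_k)}, obtained by evaluating at (i₁,…,i_k) ∈ Δ^k with 0 ≤ i₁,…,i_k ≤ 1, preserves small limits. -/

import Mathlib

/-!
STATEMENT 9 (1-categorical model).

Multisimplicial objects, `k`-uple category objects (Segal conditions in each
direction, expressed by pullback squares), `k`-fold Segal objects and complete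
`k`-fold Segal objects are modelled inside an arbitrary category.  A
presentable category is modelled as a reflective localization of a presheaf
category, and `X̃` is an arbitrary reflective localization of `Cat^k(X)`.
The claim: a functor `F : D ⥤ X̃` preserves small limits iff each of the
composites with the evaluations at the multi-indices `(i₁, …, i_k)` with
`0 ≤ i₁, …, i_k ≤ 1` preserves small limits.
-/

open CategoryTheory CategoryTheory.Limits Opposite

universe u

/-- A multi-index for `k`-fold multisimplicial objects: an object of `Δ^k`. -/
abbrev MultiIndex (k : ℕ) := Fin k → SimplexCategory

/-- The morphism of `Δ^k` which is `f` in the `i`-th coordinate and the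
identity elsewhere. -/
def piHom {k : ℕ} (m : MultiIndex k) (i : Fin k) {a b : SimplexCategory}
    (f : a ⟶ b) : (Function.update m i a : MultiIndex k) ⟶ Function.update m i b :=
  fun j =>
    if h : j = i then
      eqToHom (by rw [h]; simp) ≫ f ≫ eqToHom (by rw [h]; simp)
    else
      eqToHom (by rw [Function.update_of_ne h, Function.update_of_ne h])

/-- The edge `{n, n+1}` of the simplex `[n+1]`. -/
def lastEdge (n : ℕ) : (SimplexCategory.mk 1) ⟶ SimplexCategory.mk (n + 1) :=
  SimplexCategory.mkOfSucc (Fin.last n)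

/-- A `k`-uple category object: in each simplicial direction the Segal squares
are pullbacks. -/
def IsCatObj {C : Type*} [Category C] {k : ℕ}
    (F : (MultiIndex k)ᵒᵖ ⥤ C) : Prop :=
  ∀ (i : Fin k) (m : MultiIndex k) (n : ℕ),
    IsPullback
      (F.map (piHom m i (SimplexCategory.δ (Fin.last (n + 1)))).op)
      (F.map (piHom m i (lastEdge n)).op)
      (F.map (piHom m i (SimplexCategory.const (SimplexCategory.mk 0)
        (SimplexCategory.mk n) (Fin.last n))).op)
      (F.map (piHom m i (SimplexCategory.const (SimplexCategory.mk 0)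
        (SimplexCategory.mk 1) 0)).op)

/-- A category is presentable if it is a reflective localization of a presheaf
category (accessibility is not recorded in this 1-categorical model). -/
def IsPresentableCategory (X : Type (u + 1)) [Category.{u} X] : Prop :=
  ∃ (S : Type u) (_ : SmallCategory S) (L : (Sᵒᵖ ⥤ Type u) ⥤ X) (R : X ⥤ (Sᵒᵖ ⥤ Type u)),
    Nonempty (L ⊣ R) ∧ Nonempty R.FullyFaithful

/-!
Since `X̃ ⊆ Fun((Δ^k)ᵒᵖ, X)` is reflective, limits in `X̃` are computed in the functor category,
hence pointwise, so `F` preserves limits iff every evaluation `d ↦ F(d)_m` does. The Segal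
square in direction `i` exhibits `d ↦ F(d)_{…,n+1,…}` as the pullback of `d ↦ F(d)_{…,n,…}` and
`d ↦ F(d)_{…,1,…}` over `d ↦ F(d)_{…,0,…}` in `Fun(D, X)`, and limit-preserving functors are
closed under limits there. Inducting on `n`, one coordinate at a time, reduces every multi-index
to those with all entries `≤ 1`.
-/

namespace CategoryTheory.ObjectProperty

instance isClosedUnderLimitsOfShape_preservesLimitsOfShape {J C K K' : Type*} [Category J]
    [Category C] [Category K] [Category K'] [HasLimitsOfShape K' C] :
    (preservesLimitsOfShape K : ObjectProperty (J ⥤ C)).IsClosedUnderLimitsOfShape K' where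
  limitsOfShape_le := by
    -- `G ≅ h.diag.flip ⋙ lim`, and `lim` commutes with limits.
    rintro G ⟨h⟩
    have := h.prop_diag_obj
    have : PreservesLimitsOfShape K h.diag.flip := ⟨fun {F} ↦ ⟨fun {c} hc ↦
      ⟨evaluationJointlyReflectsLimits _ fun k' ↦ isLimitOfPreserves (h.diag.obj k') hc⟩⟩⟩
    let e : h.diag.flip ⋙ lim ≅ G :=
      NatIso.ofComponents (fun j ↦ (limit.isLimit (h.diag.flip.obj j)).conePointUniqueUpToIso
        (isLimitOfPreserves ((evaluation _ _).obj j) h.isLimit)) fun {j j'} f ↦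
        (isLimitOfPreserves ((evaluation _ _).obj j') h.isLimit).hom_ext fun k' ↦ by
          have hj := (limit.isLimit (h.diag.flip.obj j)).conePointUniqueUpToIso_hom_comp
            (isLimitOfPreserves ((evaluation _ _).obj j) h.isLimit) k'
          have hj' := (limit.isLimit (h.diag.flip.obj j')).conePointUniqueUpToIso_hom_comp
            (isLimitOfPreserves ((evaluation _ _).obj j') h.isLimit) k'
          simp only [Functor.mapCone_π_app, evaluation_obj_map] at hj hj'
          simp [reassoc_of% hj, hj']
    exact preservesLimitsOfShape_of_natIso e

lemma prop_of_isPullback {C : Type*} [Category C] (Q : ObjectProperty C)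
    [Q.IsClosedUnderLimitsOfShape WalkingCospan] {P X Y Z : C} {fst : P ⟶ X} {snd : P ⟶ Y}
    {f : X ⟶ Z} {g : Y ⟶ Z} (h : IsPullback fst snd f g) (hX : Q X) (hY : Q Y) (hZ : Q Z) :
    Q P :=
  Q.prop_of_isLimit h.isLimit (by rintro (_ | ⟨⟨⟩⟩) <;> assumption)

end CategoryTheory.ObjectProperty

lemma isCatObj_flip {C D : Type*} [Category C] [Category D] {k : ℕ}
    (G : D ⥤ (MultiIndex k)ᵒᵖ ⥤ C) (hG : ∀ d, IsCatObj (G.obj d)) : IsCatObj G.flip :=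
  fun i m n ↦ IsPullback.of_forall_isPullback_app fun d ↦ hG d i m n

namespace IsCatObj

variable {C : Type*} [Category C] {k : ℕ} {Y : (MultiIndex k)ᵒᵖ ⥤ C}
  (Q : ObjectProperty C) [Q.IsClosedUnderLimitsOfShape WalkingCospan]

lemma prop_update_of_prop_zero_of_prop_one (hY : IsCatObj Y) (m : MultiIndex k) (i : Fin k)
    (h₀ : Q (Y.obj (op (Function.update m i (SimplexCategory.mk 0)))))
    (h₁ : Q (Y.obj (op (Function.update m i (SimplexCategory.mk 1))))) (n : ℕ) :
    Q (Y.obj (op (Function.update m i (SimplexCategory.mk n)))) := by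
  induction n with
  | zero => exact h₀
  | succ n ih => exact Q.prop_of_isPullback (hY i m n) ih h₁ h₀

lemma prop_of_prop_le_one (hY : IsCatObj Y)
    (hQ : ∀ idx : Fin k → Fin 2, Q (Y.obj (op fun j => SimplexCategory.mk (idx j))))
    (m : MultiIndex k) : Q (Y.obj (op m)) := by
  suffices H : ∀ (s : Finset (Fin k)) (m : MultiIndex k), (∀ j ∉ s, (m j).len ≤ 1) →
      Q (Y.obj (op m)) from H Finset.univ m (by simp)
  intro s
  induction s using Finset.induction_on with
  | empty =>
    intro m hm
    simpa using hQ fun j => ⟨(m j).len, Nat.lt_succ_of_le (hm j (Finset.notMem_empty j))⟩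
  | insert i s _ ih =>
    intro m hm
    have hupdate (a : ℕ) (ha : a ≤ 1) :
        Q (Y.obj (op (Function.update m i (SimplexCategory.mk a)))) := by
      refine ih _ fun j hj => ?_
      by_cases hji : j = i
      · simpa [hji] using ha
      · simpa [hji] using hm j (by simp [hji, hj])
    simpa using hY.prop_update_of_prop_zero_of_prop_one Q m i (hupdate 0 (by omega))
      (hupdate 1 le_rfl) (m i).len

end IsCatObj

theorem continuity_into_reflective_localization_of_k_uple_category_objects_general
    {k : ℕ} {D : Type u} [Category.{u} D]
    (X : Type (u + 1)) [Category.{u} X]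
    [HasLimits X]
    -- `X̃` is a reflective localization of `Cat^k(X)`:
    (P : ((MultiIndex k)ᵒᵖ ⥤ X) → Prop)
    (hP : ∀ F, P F → IsCatObj F)
    (hrefl : Nonempty (Reflective (ObjectProperty.ι P)))
    (F : D ⥤ ObjectProperty.FullSubcategory P) :
    Nonempty (PreservesLimitsOfSize.{u, u} F) ↔
      ∀ idx : Fin k → Fin 2,
        Nonempty (PreservesLimitsOfSize.{u, u}
          (F ⋙ ObjectProperty.ι P ⋙
            (evaluation ((MultiIndex k)ᵒᵖ) X).obj
              (op (fun j => SimplexCategory.mk (idx j))))) := by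
  obtain ⟨_⟩ := hrefl
  refine ⟨fun ⟨_⟩ _ => ⟨inferInstance⟩, fun hidx => ⟨?_⟩⟩
  have hcat : IsCatObj (F ⋙ ObjectProperty.ι P).flip :=
    isCatObj_flip _ fun d => hP _ (F.obj d).property
  suffices PreservesLimitsOfSize.{u, u} (F ⋙ ObjectProperty.ι P) from
    preservesLimits_of_reflects_of_preserves F (ObjectProperty.ι P)
  exact preservesLimits_of_evaluation _ fun m => ⟨fun {J} _ =>
    hcat.prop_of_prop_le_one (ObjectProperty.preservesLimitsOfShape J)
      (fun idx => (hidx idx).some.preservesLimitsOfShape) m.unop⟩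

theorem continuity_into_reflective_localization_of_k_uple_category_objects
    {k : ℕ} {D : Type u} [Category.{u} D]
    (X : Type (u + 1)) [Category.{u} X] (hXpres : IsPresentableCategory.{u} X)
    [HasLimits X] [HasColimits X]
    -- `X̃` is a reflective localization of `Cat^k(X)`:
    (P : ((MultiIndex k)ᵒᵖ ⥤ X) → Prop)
    (hP : ∀ F, P F → IsCatObj F)
    (hrefl : Nonempty (Reflective (ObjectProperty.ι P)))
    (F : D ⥤ ObjectProperty.FullSubcategory P) :
    Nonempty (PreservesLimitsOfSize.{u, u} F) ↔
      ∀ idx : Fin k → Fin 2,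
        Nonempty (PreservesLimitsOfSize.{u, u}
          (F ⋙ ObjectProperty.ι P ⋙
            (evaluation ((MultiIndex k)ᵒᵖ) X).obj
              (op (fun j => SimplexCategory.mk (idx j))))) :=
  continuity_into_reflective_localization_of_k_uple_category_objects_general X P hP hrefl F
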